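/- The limit as u → 0 of P(u)·v (with P as above) is the point (M₀, N', 0), where N' is the t×s matrix that agrees with N₀ except that its (r+1)-st row is zero. Hence (M₀, N', 0) lies in the closure of the orbit G·v. -/
import Mathlib


/-- `M₀ = (I_r | 0)`, an `r × (r+s)` matrix. -/
def M0 (r s : ℕ) : Matrix (Fin r) (Fin (r + s)) ℂ :=
  Matrix.of fun i j => if (j : ℕ) = (i : ℕ) then 1 else 0

/-- `N₀ = (0 over I_s)`, an `(r+s) × s` matrix. -/
def N0 (r s : ℕ) : Matrix (Fin (r + s)) (Fin s) ℂ :=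
  Matrix.of fun i j => if (i : ℕ) = r + (j : ℕ) then 1 else 0

/-- The action of `G` on triples `(M, N, ω)`. -/
noncomputable def act (r t s : ℕ) (A : (Matrix (Fin r) (Fin r) ℂ)ˣ)
    (B : (Matrix (Fin t) (Fin t) ℂ)ˣ) (C : (Matrix (Fin s) (Fin s) ℂ)ˣ)
    (p : Matrix (Fin r) (Fin t) ℂ × Matrix (Fin t) (Fin s) ℂ × ℂ) :
    Matrix (Fin r) (Fin t) ℂ × Matrix (Fin t) (Fin s) ℂ × ℂ :=
  ((A : Matrix (Fin r) (Fin r) ℂ) * p.1 * (↑B⁻¹ : Matrix (Fin t) (Fin t) ℂ),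
   (B : Matrix (Fin t) (Fin t) ℂ) * p.2.1 * (↑C⁻¹ : Matrix (Fin s) (Fin s) ℂ),
   ((B : Matrix (Fin t) (Fin t) ℂ).det /
      ((A : Matrix (Fin r) (Fin r) ℂ).det * (C : Matrix (Fin s) (Fin s) ℂ).det)) * p.2.2)

theorem limit_in_orbit_closure (r s : ℕ) (hs : 0 < s) :
    Filter.Tendsto
      (fun u : ℂ =>
        ((M0 r s,
          (N0 r s).updateRow (⟨r, by omega⟩ : Fin (r + s))
            (u • (N0 r s) (⟨r, by omega⟩ : Fin (r + s))),
          u) :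
          Matrix (Fin r) (Fin (r + s)) ℂ × Matrix (Fin (r + s)) (Fin s) ℂ × ℂ))
      (nhds 0)
      (nhds (M0 r s, (N0 r s).updateRow (⟨r, by omega⟩ : Fin (r + s)) 0, 0)) ∧
    (M0 r s, (N0 r s).updateRow (⟨r, by omega⟩ : Fin (r + s)) 0, (0 : ℂ)) ∈
      closure {p : Matrix (Fin r) (Fin (r + s)) ℂ × Matrix (Fin (r + s)) (Fin s) ℂ × ℂ |
        ∃ (A : (Matrix (Fin r) (Fin r) ℂ)ˣ) (B : (Matrix (Fin (r + s)) (Fin (r + s)) ℂ)ˣ)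
          (C : (Matrix (Fin s) (Fin s) ℂ)ˣ),
          p = act r (r + s) s A B C (M0 r s, N0 r s, 1)} := by
  set i0 : Fin (r + s) := ⟨r, by omega⟩
  have hcont : Continuous (fun u : ℂ =>
      ((M0 r s, (N0 r s).updateRow i0 (u • (N0 r s) i0), u) :
        Matrix (Fin r) (Fin (r + s)) ℂ × Matrix (Fin (r + s)) (Fin s) ℂ × ℂ)) := by
    refine continuous_const.prodMk (Continuous.prodMk ?_ continuous_id)
    exact Continuous.matrix_updateRow i0 continuous_const
      (continuous_pi fun j => (continuous_id.smul continuous_const))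
  have htend : Filter.Tendsto
      (fun u : ℂ =>
        ((M0 r s, (N0 r s).updateRow i0 (u • (N0 r s) i0), u) :
          Matrix (Fin r) (Fin (r + s)) ℂ × Matrix (Fin (r + s)) (Fin s) ℂ × ℂ))
      (nhds 0)
      (nhds (M0 r s, (N0 r s).updateRow i0 0, 0)) := by
    have := hcont.tendsto 0
    simpa using this
  refine ⟨htend, ?_⟩
  refine mem_closure_of_tendsto (htend.mono_left (nhdsWithin_le_nhds (s := {(0:ℂ)}ᶜ))) ?_
  filter_upwards [self_mem_nhdsWithin] with u (hu : u ≠ 0)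
  -- build the diagonal unit
  set d : Fin (r + s) → ℂ := fun j => if j = i0 then u else 1 with hd
  have hdne : ∀ j, d j ≠ 0 := by
    intro j; simp only [hd]; split <;> simp [hu]
  have h1 : Matrix.diagonal d * Matrix.diagonal (fun j => (d j)⁻¹) = 1 := by
    rw [Matrix.diagonal_mul_diagonal]
    convert Matrix.diagonal_one using 2
    exact funext fun j => mul_inv_cancel₀ (hdne j)
  have h2 : Matrix.diagonal (fun j => (d j)⁻¹) * Matrix.diagonal d = 1 := by
    rw [Matrix.diagonal_mul_diagonal]
    convert Matrix.diagonal_one using 2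
    exact funext fun j => inv_mul_cancel₀ (hdne j)
  refine ⟨1, ⟨Matrix.diagonal d, Matrix.diagonal (fun j => (d j)⁻¹), h1, h2⟩, 1, ?_⟩
  simp only [act, Units.val_one, Matrix.det_one, one_mul, mul_one, inv_one, Units.inv_mk,
    Matrix.mul_one]
  refine Prod.ext ?_ (Prod.ext ?_ ?_) <;> dsimp only
  · ext i j
    rw [Matrix.mul_diagonal]
    simp only [M0, Matrix.of_apply]
    by_cases h : (j : ℕ) = (i : ℕ)
    · have hji : j ≠ i0 := by
        intro hji; rw [hji] at h; simp [i0] at h; omega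
      simp [h, hd, hji]
    · simp [h]
  · ext i j
    rw [Matrix.diagonal_mul]
    rcases eq_or_ne i i0 with hi | hi
    · subst hi
      simp [Matrix.updateRow_self, hd, Pi.smul_apply]
    · simp [Matrix.updateRow_ne hi, hd, hi]
  · rw [Matrix.det_diagonal, hd, div_one]
    simp [Finset.prod_ite_eq']
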